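/- arXiv:2303.11061 — 4 statements merged into one kernel-verified Lean document; each statement's English description precedes it below -/
import Mathlib

section
/- Let f and f_n be real-valued functions on a compact subset K of the reals. Then (f_n) converges uniformly to f on K with f continuous on K if and only if for every sequence (a_n) in K converging to a point a in K, the values f_n(a_n) converge to f(a). -/
open Filter Topology

/-- If the diagonal criterion holds, then for any strictly monotone `m` and any sequence
`z` in `K` converging to `a ∈ K`, the values `F (m j) (z j)` converge to `f a`. -/
private lemma mix_lemma {K : Set ℝ} {f : ℝ → ℝ} {F : ℕ → ℝ → ℝ}
    (H : ∀ (a : ℕ → ℝ) (l : ℝ), (∀ n, a n ∈ K) → l ∈ K → Tendsto a atTop (𝓝 l) →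
        Tendsto (fun n => F n (a n)) atTop (𝓝 (f l)))
    {m : ℕ → ℕ} (hm : StrictMono m) {z : ℕ → ℝ} {a : ℝ}
    (hz : ∀ j, z j ∈ K) (ha : a ∈ K) (hza : Tendsto z atTop (𝓝 a)) :
    Tendsto (fun j => F (m j) (z j)) atTop (𝓝 (f a)) := by
  classical
  set b : ℕ → ℝ := fun k => if h : ∃ j, m j = k then z h.choose else a with hb
  have hbK : ∀ k, b k ∈ K := by
    intro k; simp only [hb]; split
    · exact hz _
    · exact ha
  have hbm : ∀ j, b (m j) = z j := by
    intro j
    have h : ∃ i, m i = m j := ⟨j, rfl⟩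
    have hcj : h.choose = j := hm.injective h.choose_spec
    simp [hb, dif_pos h, hcj]
  have hbtend : Tendsto b atTop (𝓝 a) := by
    rw [Metric.tendsto_atTop]
    intro ε hε
    rw [Metric.tendsto_atTop] at hza
    obtain ⟨N, hN⟩ := hza ε hε
    refine ⟨m N, fun k hk => ?_⟩
    simp only [hb]; split
    · next h =>
      have hj := h.choose_spec
      have hNle : N ≤ h.choose := by
        by_contra hc
        push_neg at hc
        have := hm hc
        omega
      exact hN _ hNle
    · simpa using hε
  have h1 := H b a hbK ha hbtend
  have h2 := h1.comp hm.tendsto_atTop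
  have h3 : ((fun n => F n (b n)) ∘ m) = fun j => F (m j) (z j) := by
    funext j; simp [Function.comp, hbm j]
  rwa [h3] at h2

/-- Continuous-convergence criterion on a compact set: `fₙ → f` uniformly on `K` with `f`
continuous on `K` iff for every sequence in `K` converging to a point of `K`, the diagonal
values converge. -/
theorem uniform_convergence_iff_seq (K : Set ℝ) (hK : IsCompact K) (hKne : K.Nonempty)
    (f : ℝ → ℝ) (F : ℕ → ℝ → ℝ) :
    (TendstoUniformlyOn F f atTop K ∧ ContinuousOn f K) ↔
      ∀ (a : ℕ → ℝ) (l : ℝ), (∀ n, a n ∈ K) → l ∈ K → Tendsto a atTop (𝓝 l) →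
        Tendsto (fun n => F n (a n)) atTop (𝓝 (f l)) := by
  constructor
  · rintro ⟨hu, hf⟩ a l haK hlK hal
    rw [tendsto_iff_dist_tendsto_zero]
    have hdist : ∀ n, dist (F n (a n)) (f l) ≤
        dist (F n (a n)) (f (a n)) + dist (f (a n)) (f l) := fun n => dist_triangle _ _ _
    have h1 : Tendsto (fun n => dist (F n (a n)) (f (a n))) atTop (𝓝 0) := by
      rw [Metric.tendsto_atTop]
      intro ε hε
      rw [Metric.tendstoUniformlyOn_iff] at hu
      obtain ⟨N, hN⟩ := (hu ε hε).exists_forall_of_atTop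
      exact ⟨N, fun n hn => by
        simpa [abs_sub_comm, dist_comm] using
          (by simpa [Real.dist_eq, abs_nonneg] using (hN n hn (a n) (haK n)) : _)⟩
    have h2 : Tendsto (fun n => dist (f (a n)) (f l)) atTop (𝓝 0) := by
      have htend : Tendsto a atTop (𝓝[K] l) :=
        tendsto_nhdsWithin_of_tendsto_nhds_of_eventually_within a hal
          (Eventually.of_forall haK)
      have := (hf l hlK).tendsto.comp htend
      rwa [tendsto_iff_dist_tendsto_zero] at this
    have hsum : Tendsto (fun n => dist (F n (a n)) (f (a n)) + dist (f (a n)) (f l))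
        atTop (𝓝 0) := by simpa using h1.add h2
    exact squeeze_zero (fun n => dist_nonneg) hdist hsum
  · intro H
    -- Continuity on K first
    have hf : ContinuousOn f K := by
      intro l hlK
      have key : ∀ y : ℕ → ℝ, (∀ n, y n ∈ K) → Tendsto y atTop (𝓝 l) →
          Tendsto (fun n => f (y n)) atTop (𝓝 (f l)) := by
        intro y hyK hyl
        by_contra hcon
        rw [Metric.tendsto_atTop] at hcon
        push_neg at hcon
        obtain ⟨ε, hε, hfreq⟩ := hcon
        have hfreq' : ∃ᶠ n in atTop, ε ≤ dist (f (y n)) (f l) := by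
          rw [frequently_atTop]
          intro N
          obtain ⟨n, hn, hle⟩ := hfreq N
          exact ⟨n, hn, hle⟩
        obtain ⟨φ, hφ, hφspec⟩ := extraction_of_frequently_atTop hfreq'
        -- pointwise convergence at each y (φ j)
        have hpt : ∀ j, Tendsto (fun m => F m (y (φ j))) atTop (𝓝 (f (y (φ j)))) :=
          fun j => H (fun _ => y (φ j)) (y (φ j)) (fun _ => hyK _) (hyK _) tendsto_const_nhds
        have hEv : ∀ j, ∀ᶠ m in atTop, dist (F m (y (φ j))) (f (y (φ j))) < ε / 2 :=
          fun j => eventually_atTop.mpr (Metric.tendsto_atTop.mp (hpt j) (ε / 2) (by linarith))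
        obtain ⟨m, hmmono, hmspec⟩ := extraction_forall_of_eventually hEv
        have hmix := mix_lemma H hmmono (fun j => hyK (φ j)) hlK
          (hyl.comp hφ.tendsto_atTop)
        rw [Metric.tendsto_atTop] at hmix
        obtain ⟨N, hN⟩ := hmix (ε / 2) (by linarith)
        have h1 := hN N le_rfl
        have h2 := hmspec N
        have h3 := hφspec N
        have := dist_triangle (f (y (φ N))) (F (m N) (y (φ N))) (f l)
        rw [dist_comm (f (y (φ N))) (F (m N) (y (φ N)))] at this
        linarith
      have hcg : (𝓝[K] l).IsCountablyGenerated := by infer_instance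
      rw [ContinuousWithinAt, tendsto_iff_seq_tendsto]
      intro u hu
      have humem : ∀ᶠ n in atTop, u n ∈ K := hu.eventually self_mem_nhdsWithin
      have hul : Tendsto u atTop (𝓝 l) := hu.mono_right nhdsWithin_le_nhds
      classical
      set y : ℕ → ℝ := fun n => if u n ∈ K then u n else l with hy
      have hyK : ∀ n, y n ∈ K := by
        intro n; simp only [hy]; split
        · assumption
        · exact hlK
      have hyu : ∀ᶠ n in atTop, y n = u n := by
        filter_upwards [humem] with n hn
        simp [hy, if_pos hn]
      have hyl : Tendsto y atTop (𝓝 l) := hul.congr' (hyu.mono fun n h => h.symm)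
      have := key y hyK hyl
      exact this.congr' (hyu.mono fun n h => by rw [Function.comp_apply, ← h])
    refine ⟨?_, hf⟩
    -- Uniform convergence by contradiction
    by_contra hcon
    rw [Metric.tendstoUniformlyOn_iff] at hcon
    push_neg at hcon
    obtain ⟨ε, hε, hfreq⟩ := hcon
    have hfreq' : ∃ᶠ n in atTop, ∃ x ∈ K, ε ≤ dist (f x) (F n x) := by
      exact hfreq
    obtain ⟨ψ, hψ, hψspec⟩ := extraction_of_frequently_atTop hfreq'
    choose x hxK hxdist using hψspec
    obtain ⟨a, haK, ρ, hρ, hxρ⟩ := hK.tendsto_subseq hxK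
    have hmix := mix_lemma H (hψ.comp hρ) (fun j => hxK (ρ j)) haK hxρ
    have hfx : Tendsto (fun j => f (x (ρ j))) atTop (𝓝 (f a)) := by
      have htend : Tendsto (fun j => x (ρ j)) atTop (𝓝[K] a) :=
        tendsto_nhdsWithin_of_tendsto_nhds_of_eventually_within _ hxρ
          (Eventually.of_forall fun j => hxK (ρ j))
      exact (hf a haK).tendsto.comp htend
    have hdiff : Tendsto (fun j => dist (f (x (ρ j))) (F (ψ (ρ j)) (x (ρ j)))) atTop (𝓝 0) := by
      have := hfx.sub hmix
      rw [sub_self] at this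
      have h0 : Tendsto (fun j => dist (f (x (ρ j))) (F (ψ (ρ j)) (x (ρ j)))) atTop (𝓝 0) := by
        simpa [Real.dist_eq] using this.abs
      exact h0
    rw [Metric.tendsto_atTop] at hdiff
    obtain ⟨N, hN⟩ := hdiff ε hε
    have h1 := hN N le_rfl
    have h2 := hxdist (ρ N)
    rw [Real.dist_eq, sub_zero, abs_of_nonneg dist_nonneg] at h1
    linarith
end

section
/- Let (X_n) be real-valued random variables converging in distribution to a random variable X. Let (h_n) be uniformly bounded measurable real functions on R converging uniformly on every compact interval to a measurable function h whose set of discontinuities D(h) is closed and satisfies P(X in D(h)) = 0. Then E[h_n(X_n)] converges to E[h(X)]. -/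
open MeasureTheory ProbabilityTheory Filter Topology

open Set

noncomputable def qf (μ : Measure ℝ) (u : ℝ) : ℝ := sInf {x | u ≤ cdf μ x}

section qf
variable (μ : Measure ℝ) [IsProbabilityMeasure μ] {u : ℝ}

lemma qf_set_nonempty (hu : u < 1) : {x | u ≤ cdf μ x}.Nonempty := by
  have := (tendsto_cdf_atTop μ).eventually (eventually_ge_nhds hu)
  exact this.exists

lemma qf_set_bddBelow (hu : 0 < u) : BddBelow {x | u ≤ cdf μ x} := by
  have := (tendsto_cdf_atBot μ).eventually (eventually_lt_nhds hu)
  obtain ⟨x₀, hx₀⟩ := this.exists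
  exact ⟨x₀, fun y hy => le_of_not_gt fun hlt =>
    absurd (le_trans hy (monotone_cdf μ hlt.le)) (not_le.mpr hx₀)⟩

lemma le_cdf_qf (hu : u ∈ Ioo (0:ℝ) 1) : u ≤ cdf μ (qf μ u) := by
  set S := {x | u ≤ cdf μ x} with hS
  have hne := qf_set_nonempty μ hu.2
  have hbdd := qf_set_bddBelow μ hu.1
  have hmem : qf μ u ∈ closure S := csInf_mem_closure hne hbdd
  have hsub : S ⊆ Ici (qf μ u) := fun x hx => csInf_le hbdd hx
  have hnb : (𝓝[S] (qf μ u)).NeBot := mem_closure_iff_nhdsWithin_neBot.mp hmem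
  have ht : Tendsto (cdf μ) (𝓝[S] (qf μ u)) (𝓝 (cdf μ (qf μ u))) :=
    ((cdf μ).right_continuous (qf μ u)).mono_left (nhdsWithin_mono _ hsub)
  exact ge_of_tendsto ht (eventually_mem_nhdsWithin.mono fun x hx => hx)

lemma qf_le_iff (hu : u ∈ Ioo (0:ℝ) 1) {x : ℝ} : qf μ u ≤ x ↔ u ≤ cdf μ x := by
  constructor
  · exact fun hx => (le_cdf_qf μ hu).trans (monotone_cdf μ hx)
  · exact fun hx => csInf_le (qf_set_bddBelow μ hu.1) hx

lemma qf_monotoneOn : MonotoneOn (qf μ) (Ioo (0:ℝ) 1) := fun u hu v hv huv =>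
  csInf_le_csInf (qf_set_bddBelow μ hu.1) (qf_set_nonempty μ hv.2)
    (fun x hx => le_trans huv hx)

lemma qf_map : (volume.restrict (Ioo (0:ℝ) 1)).map (qf μ) = μ := by
  have hm : AEMeasurable (qf μ) (volume.restrict (Ioo (0:ℝ) 1)) :=
    aemeasurable_restrict_of_monotoneOn measurableSet_Ioo (qf_monotoneOn μ)
  have hprob : IsProbabilityMeasure (volume.restrict (Ioo (0:ℝ) 1)) :=
    ⟨by simp [Real.volume_Ioo]⟩
  have : IsProbabilityMeasure ((volume.restrict (Ioo (0:ℝ) 1)).map (qf μ)) :=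
    Measure.isProbabilityMeasure_map hm
  refine Measure.ext_of_Iic _ _ (fun a => ?_)
  rw [Measure.map_apply_of_aemeasurable hm measurableSet_Iic,
    Measure.restrict_apply' measurableSet_Ioo]
  have hset : qf μ ⁻¹' Iic a ∩ Ioo 0 1 = Iic (cdf μ a) ∩ Ioo 0 1 := by
    ext u
    simp only [mem_inter_iff, mem_preimage, mem_Iic, and_congr_left_iff]
    intro hu
    exact qf_le_iff μ hu
  rw [hset, ← ofReal_cdf μ a]
  rcases lt_or_eq_of_le (cdf_le_one μ a) with hlt | heq
  · have : Iic (cdf μ a) ∩ Ioo (0:ℝ) 1 = Ioc 0 (cdf μ a) := by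
      ext u
      simp only [mem_inter_iff, mem_Iic, mem_Ioo, mem_Ioc]
      exact ⟨fun ⟨h1, h2, _⟩ => ⟨h2, h1⟩, fun ⟨h1, h2⟩ => ⟨h2, h1, h2.trans_lt hlt⟩⟩
    rw [this, Real.volume_Ioc, sub_zero]
  · have : Iic (cdf μ a) ∩ Ioo (0:ℝ) 1 = Ioo 0 1 := by
      rw [inter_eq_right]
      exact fun u hu => le_of_lt (heq ▸ hu.2)
    rw [this, Real.volume_Ioo, heq]
    norm_num

lemma exists_continuityPt {a b : ℝ} (hab : a < b) :
    ∃ x, x ∈ Ioo a b ∧ ContinuousAt (cdf μ) x := by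
  by_contra hcon
  push_neg at hcon
  have hsub : Ioo a b ⊆ {x | ¬ ContinuousAt (cdf μ) x} := fun x hx => hcon x hx
  have hc : Set.Countable {x | ¬ ContinuousAt (cdf μ) x} :=
    (monotone_cdf μ).countable_not_continuousAt
  have := measure_mono_null hsub (hc.measure_zero volume)
  rw [Real.volume_Ioo] at this
  simp only [ENNReal.ofReal_eq_zero, sub_nonpos] at this
  exact absurd this (not_le.mpr hab)

end qf

lemma qf_countable_bad (μ : Measure ℝ) [IsProbabilityMeasure μ] :
    Set.Countable {u | u ∈ Ioo (0:ℝ) 1 ∧ ¬ ContinuousAt (qf μ) u} := by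
  set c : ℕ → ℝ := fun k => 1 / (k + 3) with hc
  have hcpos : ∀ k, 0 < c k := fun k => by positivity
  have hclt : ∀ k, c k < 1 - c k := by
    intro k
    have h1 : c k ≤ 1/3 := by
      rw [hc]
      apply one_div_le_one_div_of_le
      · norm_num
      · have : (0:ℝ) ≤ k := Nat.cast_nonneg k
        linarith
    linarith
  set g : ℕ → ℝ → ℝ := fun k u => qf μ (max (c k) (min u (1 - c k))) with hg
  have hmem : ∀ k u, max (c k) (min u (1 - c k)) ∈ Ioo (0:ℝ) 1 := by
    intro k u
    constructor
    · exact lt_of_lt_of_le (hcpos k) (le_max_left _ _)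
    · have : max (c k) (min u (1 - c k)) ≤ 1 - c k :=
        max_le (hclt k).le (min_le_right _ _)
      linarith [hcpos k]
  have hmono : ∀ k, Monotone (g k) := by
    intro k u v huv
    exact qf_monotoneOn μ (hmem k u) (hmem k v)
      (max_le_max le_rfl (min_le_min huv le_rfl))
  have hsub : {u | u ∈ Ioo (0:ℝ) 1 ∧ ¬ ContinuousAt (qf μ) u} ⊆
      ⋃ k, {u | ¬ ContinuousAt (g k) u} := by
    rintro u ⟨hu, hcont⟩
    obtain ⟨k, hk⟩ : ∃ k : ℕ, c k < min u (1 - u) := by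
      obtain ⟨k, hk⟩ := exists_nat_one_div_lt (show (0:ℝ) < min u (1 - u) by
        simp only [lt_min_iff]; exact ⟨hu.1, by linarith [hu.2]⟩)
      refine ⟨k, lt_of_le_of_lt ?_ hk⟩
      rw [hc]
      apply one_div_le_one_div_of_le
      · positivity
      · linarith
    refine mem_iUnion.mpr ⟨k, fun hgc => hcont ?_⟩
    have hnbhd : Ioo (c k) (1 - c k) ∈ 𝓝 u :=
      Ioo_mem_nhds (lt_of_lt_of_le hk (min_le_left _ _))
        (by have := lt_of_lt_of_le hk (min_le_right _ _); linarith)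
    have heq : g k =ᶠ[𝓝 u] qf μ := by
      filter_upwards [hnbhd] with v hv
      rw [hg]
      simp only
      rw [min_eq_left hv.2.le, max_eq_right hv.1.le]
    exact hgc.congr heq
  exact Set.Countable.mono hsub
    (Set.countable_iUnion fun k => (hmono k).countable_not_continuousAt)

lemma qf_tendsto {μ : ℕ → Measure ℝ} {μ₀ : Measure ℝ}
    [∀ n, IsProbabilityMeasure (μ n)] [IsProbabilityMeasure μ₀]
    (hdist : ∀ z : ℝ, ContinuousAt (cdf μ₀) z →
      Tendsto (fun n => cdf (μ n) z) atTop (𝓝 (cdf μ₀ z)))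
    {u : ℝ} (hu : u ∈ Ioo (0:ℝ) 1) (hcont : ContinuousAt (qf μ₀) u) :
    Tendsto (fun n => qf (μ n) u) atTop (𝓝 (qf μ₀ u)) := by
  rw [Metric.tendsto_atTop']
  intro ε hε
  -- lower bound
  obtain ⟨x, hx, hxc⟩ := exists_continuityPt μ₀ (show qf μ₀ u - ε < qf μ₀ u by linarith)
  have hFx : cdf μ₀ x < u := by
    by_contra hle
    push_neg at hle
    exact absurd ((qf_le_iff μ₀ hu).mpr hle) (not_le.mpr hx.2)
  have hlow : ∀ᶠ n in atTop, qf μ₀ u - ε < qf (μ n) u := by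
    filter_upwards [(hdist x hxc).eventually (eventually_lt_nhds hFx)] with n hn
    have : ¬ qf (μ n) u ≤ x := fun hle =>
      absurd ((qf_le_iff (μ n) hu).mp hle) (not_le.mpr hn)
    push_neg at this
    linarith [hx.1]
  -- upper bound
  obtain ⟨u', hu'⟩ : ∃ u', (qf μ₀ u' < qf μ₀ u + ε/2 ∧ u' ∈ Ioo (0:ℝ) 1) ∧ u' ∈ Ioi u := by
    have ev : ∀ᶠ v in 𝓝 u, qf μ₀ v < qf μ₀ u + ε/2 :=
      hcont.eventually (eventually_lt_nhds (by linarith))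
    have := ((ev.and (Ioo_mem_nhds hu.1 hu.2)).filter_mono
      (nhdsWithin_le_nhds (s := Ioi u))).and self_mem_nhdsWithin
    exact this.exists
  obtain ⟨⟨hu'lt, hu'mem⟩, hu'gt⟩ := hu'
  obtain ⟨x', hx', hx'c⟩ := exists_continuityPt μ₀
    (show qf μ₀ u' < qf μ₀ u + ε by linarith)
  have hFx' : u' ≤ cdf μ₀ x' := (qf_le_iff μ₀ hu'mem).mp hx'.1.le
  have hup : ∀ᶠ n in atTop, qf (μ n) u < qf μ₀ u + ε := by
    filter_upwards [(hdist x' hx'c).eventually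
      (eventually_gt_nhds (lt_of_lt_of_le hu'gt hFx'))] with n hn
    exact lt_of_le_of_lt ((qf_le_iff (μ n) hu).mpr hn.le) hx'.2
  obtain ⟨N, hN⟩ := (hlow.and hup).exists_forall_of_atTop
  refine ⟨N, fun n hn => ?_⟩
  obtain ⟨h1, h2⟩ := hN n hn.le
  rw [Real.dist_eq, abs_sub_lt_iff]
  constructor <;> linarith

/-- If `Xₙ → X` in distribution (cdf convergence at continuity points of the limit cdf),
`(hₙ)` are uniformly bounded measurable functions converging uniformly on compact intervals
to `h`, whose set of discontinuities is closed and is a null set for the law of `X`, then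
`E[hₙ(Xₙ)] → E[h(X)]`. -/
theorem tendsto_expectation_of_unif_compact_convergence
    {Ω : Type*} [MeasurableSpace Ω] (P : Measure Ω) [IsProbabilityMeasure P]
    (X : ℕ → Ω → ℝ) (X₀ : Ω → ℝ)
    (hXm : ∀ n, Measurable (X n)) (hX₀m : Measurable X₀)
    (hdist : ∀ z : ℝ, ContinuousAt (cdf (P.map X₀)) z →
      Tendsto (fun n => cdf (P.map (X n)) z) atTop (𝓝 (cdf (P.map X₀) z)))
    (h : ℕ → ℝ → ℝ) (h₀ : ℝ → ℝ)
    (hm : ∀ n, Measurable (h n)) (h₀m : Measurable h₀)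
    (M : ℝ) (hbd : ∀ n t, |h n t| ≤ M)
    (hunif : ∀ a b : ℝ, TendstoUniformlyOn h h₀ atTop (Set.Icc a b))
    (hclosed : IsClosed {t : ℝ | ¬ ContinuousAt h₀ t})
    (hnull : P.map X₀ {t : ℝ | ¬ ContinuousAt h₀ t} = 0) :
    Tendsto (fun n => ∫ ω, h n (X n ω) ∂P) atTop (𝓝 (∫ ω, h₀ (X₀ ω) ∂P)) := by
  set ν := volume.restrict (Ioo (0:ℝ) 1) with hν
  have hνprob : IsProbabilityMeasure ν := ⟨by simp [hν, Real.volume_Ioo]⟩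
  have hμn : ∀ n, IsProbabilityMeasure (P.map (X n)) := fun n =>
    Measure.isProbabilityMeasure_map (hXm n).aemeasurable
  have hμ0 : IsProbabilityMeasure (P.map X₀) := Measure.isProbabilityMeasure_map hX₀m.aemeasurable
  set Y : ℕ → ℝ → ℝ := fun n => qf (P.map (X n)) with hY
  set Y₀ : ℝ → ℝ := qf (P.map X₀) with hY₀
  have hYm : ∀ n, AEMeasurable (Y n) ν := fun n =>
    aemeasurable_restrict_of_monotoneOn measurableSet_Ioo (qf_monotoneOn _)
  have hY₀m : AEMeasurable Y₀ ν :=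
    aemeasurable_restrict_of_monotoneOn measurableSet_Ioo (qf_monotoneOn _)
  have hYmap : ∀ n, ν.map (Y n) = P.map (X n) := fun n => qf_map _
  have hY₀map : ν.map Y₀ = P.map X₀ := qf_map _
  -- a.e. good points
  have hae1 : ∀ᵐ u ∂ν, u ∈ Ioo (0:ℝ) 1 := ae_restrict_mem measurableSet_Ioo
  have haeY : ∀ᵐ u ∂ν, ContinuousAt Y₀ u := by
    refine ae_iff.mpr ?_
    rw [hν, Measure.restrict_apply' measurableSet_Ioo]
    refine measure_mono_null (fun u hu => ?_)
      ((qf_countable_bad (P.map X₀)).measure_zero volume)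
    exact ⟨hu.2, hu.1⟩
  have haeD : ∀ᵐ u ∂ν, ContinuousAt h₀ (Y₀ u) := by
    refine ae_iff.mpr ?_
    have : {u | ¬ ContinuousAt h₀ (Y₀ u)} = Y₀ ⁻¹' {t | ¬ ContinuousAt h₀ t} := rfl
    rw [this, ← Measure.map_apply_of_aemeasurable hY₀m hclosed.measurableSet, hY₀map]
    exact hnull
  -- pointwise convergence
  have hptwise : ∀ᵐ u ∂ν, Tendsto (fun n => h n (Y n u)) atTop (𝓝 (h₀ (Y₀ u))) := by
    filter_upwards [hae1, haeY, haeD] with u hu hYc hDc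
    have hYt : Tendsto (fun n => Y n u) atTop (𝓝 (Y₀ u)) := qf_tendsto hdist hu hYc
    set a := Y₀ u with ha
    rw [Metric.tendsto_nhds]
    intro ε hε
    have hIcc : ∀ᶠ n in atTop, Y n u ∈ Icc (a - 1) (a + 1) :=
      hYt (Icc_mem_nhds (by linarith) (by linarith))
    have hUn : ∀ᶠ n in atTop, ∀ t ∈ Icc (a - 1) (a + 1), dist (h₀ t) (h n t) < ε/2 :=
      (Metric.tendstoUniformlyOn_iff.mp (hunif (a - 1) (a + 1))) (ε/2) (by linarith)
    have hC : ∀ᶠ n in atTop, dist (h₀ (Y n u)) (h₀ a) < ε/2 :=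
      hYt.eventually ((Metric.tendsto_nhds.mp hDc.tendsto) (ε/2) (by linarith))
    filter_upwards [hIcc, hUn, hC] with n h1 h2 h3
    calc dist (h n (Y n u)) (h₀ a)
        ≤ dist (h n (Y n u)) (h₀ (Y n u)) + dist (h₀ (Y n u)) (h₀ a) := dist_triangle _ _ _
      _ < ε/2 + ε/2 := by
          have := h2 (Y n u) h1
          rw [dist_comm] at this
          exact add_lt_add this h3
      _ = ε := by ring
  -- dominated convergence
  have hint : Tendsto (fun n => ∫ u, h n (Y n u) ∂ν) atTop (𝓝 (∫ u, h₀ (Y₀ u) ∂ν)) := by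
    refine tendsto_integral_of_dominated_convergence (fun _ => M) ?_ ?_ ?_ hptwise
    · exact fun n => ((hm n).comp_aemeasurable (hYm n)).aestronglyMeasurable
    · exact integrable_const M
    · exact fun n => Eventually.of_forall fun u => by
        rw [Real.norm_eq_abs]; exact hbd n _
  -- transfer integrals
  have e1 : ∀ n, ∫ ω, h n (X n ω) ∂P = ∫ u, h n (Y n u) ∂ν := by
    intro n
    rw [← integral_map (hXm n).aemeasurable (hm n).aestronglyMeasurable,
      ← hYmap n, integral_map (hYm n) (hm n).aestronglyMeasurable]
  have e0 : ∫ ω, h₀ (X₀ ω) ∂P = ∫ u, h₀ (Y₀ u) ∂ν := by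
    rw [← integral_map hX₀m.aemeasurable h₀m.aestronglyMeasurable,
      ← hY₀map, integral_map hY₀m h₀m.aestronglyMeasurable]
  simp_rw [e1, e0]
  exact hint
end

section
/- Fix x in [0,1] and n a natural number. Let C_n ~ Bin(n,x) and, independently for each k in {0,...,n}, let B_{n,k} ~ Beta(k+1, n-k+1). Define X_n = B_{n,C_n} (i.e., conditionally on C_n = k, X_n has law Beta(k+1,n-k+1)). Then the distribution of X_n has density K_n(x,t) = (n+1) * sum_{k=0}^n p_{n,k}(x) * p_{n,k}(t) with respect to Lebesgue measure on [0,1]. -/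
open MeasureTheory ProbabilityTheory Filter Topology

/-- Bernstein basis polynomial `p_{n,k}(t)`. -/
noncomputable def bPoly (n k : ℕ) (t : ℝ) : ℝ := (n.choose k : ℝ) * t ^ k * (1 - t) ^ (n - k)

/-- Density of the `Beta(a,b)` distribution on `[0,1]` (real powers). -/
noncomputable def betaPdf (a b t : ℝ) : ℝ :=
  if t ∈ Set.Icc (0 : ℝ) 1 then
    t ^ (a - 1) * (1 - t) ^ (b - 1) * Real.Gamma (a + b) / (Real.Gamma a * Real.Gamma b)
  else 0

/-- The `Beta(a,b)` distribution as a measure on `ℝ`. -/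
noncomputable def betaMeasure (a b : ℝ) : Measure ℝ :=
  volume.withDensity fun t => ENNReal.ofReal (betaPdf a b t)

/-- The law of `X_n` (sample `C_n ~ Bin(n,x)`, then given `C_n = k` sample from
`Beta(k+1, n-k+1)`): a mixture of beta distributions with binomial weights. -/
noncomputable def durrmeyerMixture (n : ℕ) (x : ℝ) : Measure ℝ :=
  ∑ k ∈ Finset.range (n + 1),
    (ENNReal.ofReal (bPoly n k x)) • _root_.betaMeasure ((k : ℝ) + 1) ((n : ℝ) - k + 1)

/-!
On `[0,1]` the `Beta(k+1, n-k+1)` density is `(n+1) p_{n,k}`, since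
`Γ(n+2) / (Γ(k+1) Γ(n-k+1)) = (n+1) C(n,k)`; and a finite mixture of measures with densities
has the mixture of the densities as its density.
-/

open scoped ENNReal

theorem MeasureTheory.Measure.finsetSum_smul_withDensity {α ι : Type*} [MeasurableSpace α]
    (μ : Measure α) (s : Finset ι) (c : ι → ℝ≥0∞) {f : ι → α → ℝ≥0∞}
    (hf : ∀ i ∈ s, Measurable (f i)) :
    ∑ i ∈ s, c i • μ.withDensity (f i) = μ.withDensity fun a => ∑ i ∈ s, c i * f i a := by
  ext A hA
  rw [Measure.coe_finsetSum, Finset.sum_apply, withDensity_apply _ hA,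
    lintegral_finsetSum _ fun i hi => (hf i hi).const_mul (c i)]
  refine Finset.sum_congr rfl fun i hi => ?_
  rw [Measure.smul_apply, withDensity_apply _ hA, lintegral_const_mul _ (hf i hi), smul_eq_mul]

lemma bPoly_nonneg (n k : ℕ) {t : ℝ} (ht : t ∈ Set.Icc (0 : ℝ) 1) : 0 ≤ bPoly n k t := by
  have : 0 ≤ 1 - t := sub_nonneg.2 ht.2
  have := ht.1
  unfold bPoly
  positivity

lemma Real.Gamma_div_Gamma_mul_Gamma_natCast {n k : ℕ} (hk : k ≤ n) :
    Real.Gamma ((k : ℝ) + 1 + ((n : ℝ) - k + 1)) /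
        (Real.Gamma ((k : ℝ) + 1) * Real.Gamma ((n : ℝ) - k + 1)) =
      ((n : ℝ) + 1) * n.choose k := by
  rw [show (k : ℝ) + 1 + ((n : ℝ) - k + 1) = ((n + 1 : ℕ) : ℝ) + 1 by push_cast; ring,
    show (n : ℝ) - k + 1 = ((n - k : ℕ) : ℝ) + 1 by push_cast [hk]; ring,
    Real.Gamma_nat_eq_factorial, Real.Gamma_nat_eq_factorial, Real.Gamma_nat_eq_factorial,
    Nat.cast_choose ℝ hk, Nat.factorial_succ]
  push_cast
  ring

lemma measurable_betaPdf (a b : ℝ) : Measurable (betaPdf a b) :=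
  Measurable.ite measurableSet_Icc (by fun_prop) measurable_const

lemma betaPdf_natCast_add_one {n k : ℕ} (hk : k ≤ n) {t : ℝ} (ht : t ∈ Set.Icc (0 : ℝ) 1) :
    betaPdf ((k : ℝ) + 1) ((n : ℝ) - k + 1) t = ((n : ℝ) + 1) * bPoly n k t := by
  rw [betaPdf, if_pos ht, mul_div_assoc, Real.Gamma_div_Gamma_mul_Gamma_natCast hk, bPoly,
    add_sub_cancel_right, show (n : ℝ) - k + 1 - 1 = ((n - k : ℕ) : ℝ) by push_cast [hk]; ring,
    Real.rpow_natCast, Real.rpow_natCast]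
  ring

/-- The law of `X_n` has density `K_n(x,t) = (n+1) ∑ₖ p_{n,k}(x) p_{n,k}(t)` with respect
to Lebesgue measure on `[0,1]`. -/
theorem durrmeyerMixture_eq_withDensity_kernel (n : ℕ) (x : ℝ) (hx : x ∈ Set.Icc (0 : ℝ) 1) :
    durrmeyerMixture n x =
      volume.withDensity fun t =>
        ENNReal.ofReal
          (if t ∈ Set.Icc (0 : ℝ) 1 then
            ((n : ℝ) + 1) * ∑ k ∈ Finset.range (n + 1), bPoly n k x * bPoly n k t
          else 0) := by
  unfold durrmeyerMixture _root_.betaMeasure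
  rw [Measure.finsetSum_smul_withDensity _ _ _
    fun k _ => (measurable_betaPdf _ _).ennreal_ofReal]
  congr 1
  funext t
  split_ifs with ht
  · rw [Finset.mul_sum, ENNReal.ofReal_sum_of_nonneg fun k _ =>
      by have := bPoly_nonneg n k hx; have := bPoly_nonneg n k ht; positivity]
    refine Finset.sum_congr rfl fun k hk => ?_
    rw [betaPdf_natCast_add_one (Nat.lt_succ_iff.mp (Finset.mem_range.mp hk)) ht,
      ← ENNReal.ofReal_mul (bPoly_nonneg n k hx), mul_left_comm]
  · simp [betaPdf, ht]
end

section
/- For positive reals a, b with a != b, the integral from 0 to 1 of a(1-u)/(b u + a(1-u)) du equals (r^2 - r - r ln r)/(r-1)^2, where r = a/b. In particular, when a = b the integral equals 1/2. -/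
open MeasureTheory

/-- Evaluation of the weight `ν = ∫₀¹ a(1-u)/(bu + a(1-u)) du`: for `a ≠ b` it equals
`(r² - r - r ln r)/(r-1)²` with `r = a/b`, and for `a = b` it equals `1/2`. -/
theorem nu_integral_eval (a b : ℝ) (ha : 0 < a) (hb : 0 < b) :
    (a ≠ b →
      (∫ u in (0:ℝ)..1, a * (1 - u) / (b * u + a * (1 - u))) =
        ((a / b) ^ 2 - a / b - (a / b) * Real.log (a / b)) / (a / b - 1) ^ 2) ∧
    (a = b → (∫ u in (0:ℝ)..1, a * (1 - u) / (b * u + a * (1 - u))) = 1 / 2) := by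
  have hdenom : ∀ u ∈ Set.Icc (0:ℝ) 1, 0 < b * u + a * (1 - u) := by
    rintro u ⟨h0, h1⟩
    rcases le_total a b with h | h
    · nlinarith [mul_nonneg (sub_nonneg.mpr h) h0]
    · nlinarith [mul_nonneg (sub_nonneg.mpr h) (sub_nonneg.mpr h1)]
  constructor
  · intro hab
    have hc : b - a ≠ 0 := sub_ne_zero.mpr (Ne.symm hab)
    have hderiv : ∀ u ∈ Set.uIcc (0:ℝ) 1,
        HasDerivAt (fun u => (-a/(b-a)) * u + (a*b/(b-a)^2) * Real.log (a + (b-a)*u))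
          (a * (1 - u) / (b * u + a * (1 - u))) u := by
      intro u hu
      rw [Set.uIcc_of_le zero_le_one] at hu
      have hd : b * u + a * (1 - u) = a + (b - a) * u := by ring
      have hpos : 0 < a + (b - a) * u := by rw [← hd]; exact hdenom u hu
      have h1 : HasDerivAt (fun u : ℝ => (-a/(b-a)) * u) (-a/(b-a)) u := by
        simpa using (hasDerivAt_id u).const_mul (-a/(b-a))
      have hinner : HasDerivAt (fun u : ℝ => a + (b-a) * u) (b-a) u := by
        simpa using ((hasDerivAt_id u).const_mul (b-a)).const_add a
      have h2 : HasDerivAt (fun u : ℝ => Real.log (a + (b-a)*u))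
          ((b-a) / (a + (b-a)*u)) u := hinner.log hpos.ne'
      have h := h1.add (h2.const_mul (a*b/(b-a)^2))
      refine h.congr_deriv ?_
      rw [hd]
      field_simp
      ring
    have hint : IntervalIntegrable (fun u => a * (1 - u) / (b * u + a * (1 - u)))
        volume 0 1 := by
      apply ContinuousOn.intervalIntegrable
      rw [Set.uIcc_of_le zero_le_one]
      apply ContinuousOn.div
      · fun_prop
      · fun_prop
      · intro u hu
        exact (hdenom u hu).ne'
    rw [intervalIntegral.integral_eq_sub_of_hasDerivAt hderiv hint]
    have hac : a + (b - a) * 1 = b := by ring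
    have hac0 : a + (b - a) * 0 = a := by ring
    rw [hac, hac0]
    have hr1 : a / b - 1 ≠ 0 := by
      rw [div_sub_one hb.ne']
      exact div_ne_zero (fun h => hc (by linarith [sub_eq_zero.mp h])) hb.ne'
    rw [Real.log_div ha.ne' hb.ne']
    have hRHS : ((a/b)^2 - a/b - (a/b)*(Real.log a - Real.log b))/(a/b-1)^2
        = (a*b*(Real.log b - Real.log a) - a*(b-a))/(b-a)^2 := by
      rw [div_eq_div_iff (pow_ne_zero 2 hr1) (pow_ne_zero 2 hc)]
      field_simp
      ring
    rw [hRHS]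
    field_simp
    ring
  · intro hab
    subst hab
    have heq : ∀ u : ℝ, a * (1 - u) / (a * u + a * (1 - u)) = 1 - u := by
      intro u
      have h : a * u + a * (1 - u) = a := by ring
      rw [h, mul_comm, mul_div_assoc, div_self ha.ne', mul_one]
    simp only [heq]
    rw [intervalIntegral.integral_sub intervalIntegrable_const
      intervalIntegral.intervalIntegrable_id, intervalIntegral.integral_const,
      integral_id]
    norm_num
end
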